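/- arXiv:2505.02977 — 3 statements merged into one kernel-verified Lean document; each statement's English description precedes it below -/
import Mathlib

section
/- Let L be a graph Laplacian, k a vertex with ℓ_{kk} > 0, and L^{(k)} = Σ_{i ∈ N_k} (−ℓ_{ki}) b_{ki} b_{ki}^T. Then L^{(k)} − (1/ℓ_{kk}) L(:,k) L(k,:) = (1/2) Σ_{i,j ∈ N_k} (ℓ_{ki} ℓ_{kj} / ℓ_{kk}) b_{ij} b_{ij}^T; in particular, the Schur complement of the star around k is the Laplacian of the clique on the neighbors of k with edge weight ℓ_{ki}ℓ_{kj}/ℓ_{kk} between neighbors i and j. -/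
open Matrix Finset

/-- The vector `b_{ij} = e_i - e_j` in `ℝ^N`. -/
noncomputable def stdb {N : ℕ} (i j : Fin N) : Fin N → ℝ :=
  fun k => (if k = i then (1 : ℝ) else 0) - (if k = j then (1 : ℝ) else 0)

/-- The graph Laplacian `L = ∑_{i<j} w_{ij} b_{ij} b_{ij}ᵀ` of the weighted graph with
weight `w i j` on the (undirected) edge `{i,j}` (`w i j = 0` meaning no edge). -/
noncomputable def lap {N : ℕ} (w : Fin N → Fin N → ℝ) : Matrix (Fin N) (Fin N) ℝ :=
  ∑ p : Fin N × Fin N,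
    if p.1 < p.2 then w p.1 p.2 • Matrix.vecMulVec (stdb p.1 p.2) (stdb p.1 p.2) else 0

/-! With `wᵢ = -ℓ_{ki}` and `xᵢ = b_{ki}` the star is `∑ wᵢ xᵢ xᵢᵀ`; since `xᵢ(k) = 1`, its
`k`-th column and row are both `∑ wᵢ xᵢ`, and `ℓ_{kk} = ∑ wᵢ`. The claim is then the weighted
covariance identity `c ∑ wᵢ xᵢ xᵢᵀ - (∑ wᵢ xᵢ)(∑ wᵢ xᵢ)ᵀ = ½ ∑_{i,j} wᵢ wⱼ (xᵢ - xⱼ)(xᵢ - xⱼ)ᵀ`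
for `c = ∑ wᵢ`, combined with `b_{ki} - b_{kj} = b_{ji} = -b_{ij}`. -/

section Covariance

variable {ι n R : Type*} (s : Finset ι)

theorem sum_sum_mul_mul_sub_mul_sub [CommRing R] (w p q : ι → R) :
    ∑ i ∈ s, ∑ j ∈ s, w i * w j * ((p i - p j) * (q i - q j)) =
      2 * ((∑ i ∈ s, w i) * ∑ i ∈ s, w i * (p i * q i)
        - (∑ i ∈ s, w i * p i) * ∑ i ∈ s, w i * q i) := by
  have expand : ∀ i j, w i * w j * ((p i - p j) * (q i - q j)) =
      w j * (w i * (p i * q i)) - (w i * p i) * (w j * q j) - (w i * q i) * (w j * p j)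
        + w i * (w j * (p j * q j)) := fun i j => by ring
  simp only [expand, sum_add_distrib, sum_sub_distrib, ← mul_sum, ← sum_mul]
  ring

theorem sum_sum_smul_vecMulVec_sub [CommRing R] (w : ι → R) (x : ι → n → R) :
    ∑ i ∈ s, ∑ j ∈ s, (w i * w j) • vecMulVec (x i - x j) (x i - x j) =
      (2 : R) • ((∑ i ∈ s, w i) • ∑ i ∈ s, w i • vecMulVec (x i) (x i)
        - vecMulVec (∑ i ∈ s, w i • x i) (∑ i ∈ s, w i • x i)) := by
  ext a b
  simp only [Matrix.sum_apply, Matrix.smul_apply, Matrix.sub_apply, vecMulVec_apply,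
    Pi.sub_apply, smul_eq_mul, Finset.sum_apply, Pi.smul_apply]
  rw [sum_sum_mul_mul_sub_mul_sub]

theorem sum_smul_vecMulVec_sub_inv_smul_vecMulVec [Field R] [NeZero (2 : R)] (w : ι → R)
    (x : ι → n → R) {c : R} (hc : ∑ i ∈ s, w i = c) (hc0 : c ≠ 0) :
    ∑ i ∈ s, w i • vecMulVec (x i) (x i)
        - c⁻¹ • vecMulVec (∑ i ∈ s, w i • x i) (∑ i ∈ s, w i • x i) =
      (1 / 2 : R) • ∑ i ∈ s, ∑ j ∈ s, (w i * w j / c) • vecMulVec (x i - x j) (x i - x j) := by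
  have hdiv : ∀ i j, w i * w j / c = c⁻¹ * (w i * w j) := fun i j => by ring
  have hpull : ∑ i ∈ s, ∑ j ∈ s, (w i * w j / c) • vecMulVec (x i - x j) (x i - x j) =
      c⁻¹ • ∑ i ∈ s, ∑ j ∈ s, (w i * w j) • vecMulVec (x i - x j) (x i - x j) := by
    simp only [smul_sum, smul_smul, hdiv]
  have hc1 : 1 / 2 * c⁻¹ * 2 * c = 1 := by field_simp
  have hc2 : 1 / 2 * c⁻¹ * 2 = c⁻¹ := by field_simp
  rw [hpull, sum_sum_smul_vecMulVec_sub, hc, smul_smul, smul_smul, smul_sub, smul_smul, hc1, hc2,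
    one_smul]

end Covariance

section StarColumn

variable {ι n R : Type*} [Semiring R] (s : Finset ι) (w : ι → R) (x : ι → n → R) {k : n}

theorem sum_smul_vecMulVec_apply_right (hx : ∀ i ∈ s, x i k = 1) (a : n) :
    (∑ i ∈ s, w i • vecMulVec (x i) (x i)) a k = (∑ i ∈ s, w i • x i) a := by
  simp only [Matrix.sum_apply, Matrix.smul_apply, vecMulVec_apply, Finset.sum_apply,
    Pi.smul_apply]
  exact sum_congr rfl fun i hi => by rw [hx i hi, mul_one]

theorem sum_smul_vecMulVec_apply_left (hx : ∀ i ∈ s, x i k = 1) (b : n) :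
    (∑ i ∈ s, w i • vecMulVec (x i) (x i)) k b = (∑ i ∈ s, w i • x i) b := by
  simp only [Matrix.sum_apply, Matrix.smul_apply, vecMulVec_apply, Finset.sum_apply,
    Pi.smul_apply]
  exact sum_congr rfl fun i hi => by rw [hx i hi, one_mul]

end StarColumn

section Stdb

variable {N : ℕ}

theorem stdb_apply_left {i j : Fin N} (hij : j ≠ i) : stdb i j i = 1 := by
  simp [stdb, hij.symm]

theorem stdb_sub_stdb (k i j : Fin N) : stdb k i - stdb k j = stdb j i := by
  funext a
  simp only [stdb, Pi.sub_apply]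
  ring

theorem stdb_swap (i j : Fin N) : stdb j i = -stdb i j := by
  funext a
  simp only [stdb, Pi.neg_apply]
  ring

theorem vecMulVec_stdb_swap (i j : Fin N) :
    vecMulVec (stdb j i) (stdb j i) = vecMulVec (stdb i j) (stdb i j) := by
  rw [stdb_swap, neg_vecMulVec, vecMulVec_neg, neg_neg]

end Stdb

theorem stmt_7 {N : ℕ} (L : Matrix (Fin N) (Fin N) ℝ) (k : Fin N)
    (Nk : Finset (Fin N)) (hNk : Nk = Finset.univ.filter (fun j => L k j ≠ 0 ∧ j ≠ k))
    (Lk : Matrix (Fin N) (Fin N) ℝ)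
    (hLk : Lk = ∑ i ∈ Nk, (-(L k i)) • Matrix.vecMulVec (stdb k i) (stdb k i))
    (hkk : L k k = -∑ i ∈ Nk, L k i) (hkkpos : 0 < L k k)
    (hcol : ∀ a, L a k = Lk a k) (hrow : ∀ a, L k a = Lk k a) :
    Lk - (L k k)⁻¹ • Matrix.vecMulVec (fun a => L a k) (fun a => L k a) =
      (1 / 2 : ℝ) • ∑ i ∈ Nk, ∑ j ∈ Nk,
        ((L k i * L k j) / L k k) • Matrix.vecMulVec (stdb i j) (stdb i j) := by
  have hNk_ne : ∀ i ∈ Nk, i ≠ k := fun i hi => by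
    rw [hNk] at hi
    exact (mem_filter.1 hi).2.2
  have hstar : ∀ i ∈ Nk, stdb k i k = 1 := fun i hi => stdb_apply_left (hNk_ne i hi)
  have hcolk : (fun a => L a k) = ∑ i ∈ Nk, (-L k i) • stdb k i := funext fun a => by
    rw [hcol, hLk, sum_smul_vecMulVec_apply_right _ _ _ hstar]
  have hrowk : (fun a => L k a) = ∑ i ∈ Nk, (-L k i) • stdb k i := funext fun b => by
    rw [hrow, hLk, sum_smul_vecMulVec_apply_left _ _ _ hstar]
  rw [hcolk, hrowk, hLk, sum_smul_vecMulVec_sub_inv_smul_vecMulVec Nk _ _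
    (by rw [sum_neg_distrib, hkk]) hkkpos.ne']
  simp only [neg_mul_neg, stdb_sub_stdb, vecMulVec_stdb_swap]
end

section
/- In the classical Cholesky factorization of a sparse symmetric positive definite matrix A viewed via its graph G, entry (i,j) with j < i is nonzero in the Cholesky factor if and only if there exists a path from i to j in G whose intermediate vertices all have labels smaller than min(i,j) = j (the Rose–Tarjan fill path theorem). In particular, vertex i depends on vertex j (j < i) in the elimination iff there is a path i → p_1 → ... → p_t → j with all p_s < i. -/
open Matrix Finset

/-- One step of graph elimination: eliminating vertex `k` deletes `k` (and incident
edges) and connects every pair of distinct remaining neighbors of `k`. -/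
def elimStep {N : ℕ} (A : Fin N → Fin N → Prop) (k : Fin N) : Fin N → Fin N → Prop :=
  fun u v => u ≠ k ∧ v ≠ k ∧ (A u v ∨ (u ≠ v ∧ A u k ∧ A k v))

/-- `filled A m` is the elimination graph after eliminating vertices `0, …, m-1` in order. -/
def filled {N : ℕ} (A : Fin N → Fin N → Prop) : ℕ → (Fin N → Fin N → Prop)
  | 0 => A
  | m + 1 => if h : m < N then elimStep (filled A m) ⟨m, h⟩ else filled A m

/-
Graph elimination is characterised by paths: after eliminating `0, …, m-1`, two distinct
vertices `u, v ≥ m` are adjacent iff some path of the original graph joins them through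
vertices `< m` only. Induct on `m`: eliminating `m` adds the edge `uv` exactly when there are
such paths `u ⇝ m` and `m ⇝ v`, and conversely a path that may pass through `m` either avoids
it or splits at `m` into two such paths.
-/

section PathVia

variable {α : Type*} (R : α → α → Prop)

def PathVia (P : α → Prop) (a b : α) : Prop :=
  ∃ p : List α, List.IsChain R (a :: (p ++ [b])) ∧ ∀ x ∈ p, P x

variable {R} {P Q : α → Prop} {a b k : α}

theorem pathVia_of_rel (h : R a b) : PathVia R P a b :=
  ⟨[], List.isChain_pair.2 h, by simp⟩

theorem pathVia_iff_rel (hP : ∀ x, ¬ P x) : PathVia R P a b ↔ R a b := by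
  refine ⟨?_, pathVia_of_rel⟩
  rintro ⟨_ | ⟨x, p⟩, hc, hp⟩
  · exact List.isChain_pair.1 hc
  · exact absurd (hp x List.mem_cons_self) (hP x)

theorem PathVia.cons (hax : R a k) (hk : P k) (h : PathVia R P k b) : PathVia R P a b := by
  obtain ⟨p, hc, hp⟩ := h
  exact ⟨k :: p, List.isChain_cons_cons.2 ⟨hax, hc⟩, List.forall_mem_cons.2 ⟨hk, hp⟩⟩

theorem PathVia.mono (hPQ : ∀ x, P x → Q x) (h : PathVia R P a b) : PathVia R Q a b := by
  obtain ⟨p, hc, hp⟩ := h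
  exact ⟨p, hc, fun x hx => hPQ x (hp x hx)⟩

theorem PathVia.trans (h₁ : PathVia R P a k) (hk : P k) (h₂ : PathVia R P k b) :
    PathVia R P a b := by
  obtain ⟨p, hp, hpP⟩ := h₁
  obtain ⟨q, hq, hqP⟩ := h₂
  refine ⟨p ++ k :: q, ?_, ?_⟩
  · simpa using List.isChain_cons_split.2 ⟨hp, hq⟩
  · simp only [List.mem_append, List.mem_cons]
    rintro x (hx | rfl | hx)
    exacts [hpP x hx, hk, hqP x hx]

theorem PathVia.split (h : PathVia R (fun x => P x ∨ x = k) a b) :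
    PathVia R P a b ∨ PathVia R P a k ∧ PathVia R P k b := by
  obtain ⟨p, hc, hp⟩ := h
  induction p generalizing a with
  | nil => exact Or.inl (pathVia_of_rel (List.isChain_pair.1 hc))
  | cons x p ih =>
    obtain ⟨hax, hc⟩ := List.isChain_cons_cons.1 hc
    obtain ⟨hx, hp⟩ := List.forall_mem_cons.1 hp
    rcases hx with hx | rfl
    · rcases ih hc hp with h | ⟨h₁, h₂⟩
      · exact Or.inl (h.cons hax hx)
      · exact Or.inr ⟨h₁.cons hax hx, h₂⟩
    · refine Or.inr ⟨pathVia_of_rel hax, ?_⟩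
      rcases ih hc hp with h | ⟨-, h⟩ <;> exact h

end PathVia

theorem filled_iff_pathVia {N : ℕ} (A : Fin N → Fin N → Prop) (m : ℕ) {u v : Fin N}
    (huv : u ≠ v) :
    filled A m u v ↔ m ≤ u.val ∧ m ≤ v.val ∧ PathVia A (fun x => x.val < m) u v := by
  induction m generalizing u v with
  | zero => simp [filled, pathVia_iff_rel]
  | succ m ih =>
    by_cases hm : m < N
    swap
    · rw [filled, dif_neg hm, ih huv]
      have := u.isLt
      omega
    set k : Fin N := ⟨m, hm⟩
    have hsucc {w : Fin N} (hw : w ≠ k) (hmw : m ≤ w.val) : m + 1 ≤ w.val :=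
      Nat.lt_of_le_of_ne hmw (Fin.val_ne_of_ne hw).symm
    have hlt (x : Fin N) (hx : x.val < m) : x.val < m + 1 := Nat.lt_succ_of_lt hx
    rw [filled, dif_pos hm]
    constructor
    · rintro ⟨huk, hvk, hA | ⟨-, huk', hkv'⟩⟩
      · obtain ⟨hu, hv, h⟩ := (ih huv).1 hA
        exact ⟨hsucc huk hu, hsucc hvk hv, h.mono hlt⟩
      · obtain ⟨hu, -, h₁⟩ := (ih huk).1 huk'
        obtain ⟨-, hv, h₂⟩ := (ih (Ne.symm hvk)).1 hkv'
        exact ⟨hsucc huk hu, hsucc hvk hv,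
          (h₁.mono hlt).trans (Nat.lt_succ_self m) (h₂.mono hlt)⟩
    · rintro ⟨hu, hv, h⟩
      have huk : u ≠ k := Fin.ne_of_val_ne (show u.val ≠ m by omega)
      have hvk : v ≠ k := Fin.ne_of_val_ne (show v.val ≠ m by omega)
      refine ⟨huk, hvk, ?_⟩
      have h' : PathVia A (fun x => x.val < m ∨ x = k) u v :=
        h.mono fun x hx => (Nat.lt_succ_iff_lt_or_eq.1 hx).imp_right Fin.ext
      rcases h'.split with h | ⟨h₁, h₂⟩
      · exact Or.inl ((ih huv).2 ⟨by omega, by omega, h⟩)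
      · exact Or.inr ⟨huv, (ih huk).2 ⟨by omega, le_rfl, h₁⟩,
          (ih (Ne.symm hvk)).2 ⟨le_rfl, by omega, h₂⟩⟩

theorem stmt_13_general {N : ℕ} (A : Fin N → Fin N → Prop)
    (i j : Fin N) (hji : j < i) :
    filled A j.val i j ↔
      ∃ p : List (Fin N), List.Chain A i (p ++ [j]) ∧ ∀ v ∈ p, v < j := by
  rw [filled_iff_pathVia A j.val hji.ne']
  simp only [le_refl, true_and, and_iff_right (Fin.le_iff_val_le_val.1 hji.le)]
  exact Iff.rfl

/-- Rose–Tarjan fill path theorem: for `j < i`, entry `(i,j)` is a (fill) nonzero of the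
Cholesky factor — i.e. `i` and `j` are adjacent in the elimination graph right before `j`
is eliminated — iff there is a path from `i` to `j` in the original graph all of whose
intermediate vertices are smaller than `j = min(i,j)`. -/
theorem stmt_13 {N : ℕ} (A : Fin N → Fin N → Prop)
    (hsymm : ∀ u v, A u v → A v u) (hirr : ∀ u, ¬ A u u)
    (i j : Fin N) (hji : j < i) :
    filled A j.val i j ↔
      ∃ p : List (Fin N), List.Chain A i (p ++ [j]) ∧ ∀ v ∈ p, v < j :=
  stmt_13_general A i j hji
end

section
/- After one step of exact Laplacian elimination of a vertex k in a connected weighted graph, the resulting Schur complement (restricted to the remaining N−1 vertices) is again the Laplacian of a connected weighted graph with positive edge weights. -/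
open Matrix Finset

lemma exists_first_step {α : Type*} {r : α → α → Prop} {a b : α}
    (h : Relation.ReflTransGen r a b) : a = b ∨ ∃ c, c ≠ a ∧ r a c := by
  induction h using Relation.ReflTransGen.head_induction_on with
  | refl => exact Or.inl rfl
  | head h' h ih =>
    rename_i x c
    rcases eq_or_ne c x with rfl | hcx
    · rcases ih with rfl | ⟨d, hd, hr⟩
      · exact Or.inl rfl
      · exact Or.inr ⟨d, hd, hr⟩
    · exact Or.inr ⟨c, hcx, h'⟩

lemma lift_conn {α : Type*} (r r' : α → α → Prop) (k : α)
    (hstep : ∀ a b, a ≠ k → b ≠ k → r a b → r' a b)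
    (hclique : ∀ a b, a ≠ k → b ≠ k → r a k → r k b → r' a b)
    {u v : α} (hu : u ≠ k) (hv : v ≠ k) (h : Relation.ReflTransGen r u v) :
    Relation.ReflTransGen r' u v := by
  have key : ∀ x, Relation.ReflTransGen r u x →
      (x ≠ k → Relation.ReflTransGen r' u x) ∧
      (x = k → ∃ a, a ≠ k ∧ Relation.ReflTransGen r' u a ∧ r a k) := by
    intro x hx
    induction hx with
    | refl => exact ⟨fun _ => Relation.ReflTransGen.refl, fun hk => absurd hk hu⟩
    | @tail b c hub hbc ih =>
      constructor
      · intro hc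
        rcases eq_or_ne b k with rfl | hb
        · obtain ⟨a, hak, hua, hrak⟩ := ih.2 rfl
          exact hua.tail (hclique a c hak hc hrak hbc)
        · exact (ih.1 hb).tail (hstep b c hb hc hbc)
      · intro hc
        rcases eq_or_ne b k with rfl | hb
        · exact ih.2 rfl
        · exact ⟨b, hb, ih.1 hb, hc ▸ hbc⟩
  exact (key v h).1 hv


lemma lap_apply {N : ℕ} (w : Fin N → Fin N → ℝ) (hsymm : ∀ i j, w i j = w j i)
    (i j : Fin N) :
    lap w i j = if i = j then ∑ l, (if l = i then (0:ℝ) else w i l) else -w i j := by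
  have hentry : lap w i j = ∑ p : Fin N × Fin N, (if p.1 < p.2 then
      w p.1 p.2 * (((if i = p.1 then (1:ℝ) else 0) - (if i = p.2 then 1 else 0)) *
        ((if j = p.1 then (1:ℝ) else 0) - (if j = p.2 then 1 else 0))) else 0) := by
    rw [lap, Matrix.sum_apply]
    refine Finset.sum_congr rfl fun p _ => ?_
    split <;> simp [stdb, Matrix.vecMulVec_apply, mul_comm]
  rw [hentry]
  by_cases hij : i = j
  · subst hij
    rw [if_pos rfl]
    have step : ∀ p : Fin N × Fin N, (if p.1 < p.2 then
        w p.1 p.2 * (((if i = p.1 then (1:ℝ) else 0) - (if i = p.2 then 1 else 0)) *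
          ((if i = p.1 then (1:ℝ) else 0) - (if i = p.2 then 1 else 0))) else 0)
        = (if p.1 < p.2 then w p.1 p.2 * (if i = p.1 then (1:ℝ) else 0) else 0)
          + (if p.1 < p.2 then w p.1 p.2 * (if i = p.2 then (1:ℝ) else 0) else 0) := by
      rintro ⟨a, b⟩
      by_cases hab : a < b
      · have hne : a ≠ b := ne_of_lt hab
        simp only [if_pos hab]
        rcases eq_or_ne i a with rfl | h1 <;> rcases eq_or_ne i b with rfl | h2
        · exact absurd rfl hne
        · simp [h2]
        · simp [h1]
        · simp [h1, h2]
      · simp [hab]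
    rw [Finset.sum_congr rfl (fun p _ => step p), Finset.sum_add_distrib,
      Fintype.sum_prod_type, Fintype.sum_prod_type]
    have e1 : ∀ a : Fin N, (∑ b, if a < b then w a b * (if i = a then (1:ℝ) else 0) else 0)
        = if i = a then (∑ b, if a < b then w a b else 0) else 0 := by
      intro a
      by_cases h : i = a <;> simp [h]
    have e2 : ∀ a : Fin N, (∑ b, if a < b then w a b * (if i = b then (1:ℝ) else 0) else 0)
        = if a < i then w a i else 0 := by
      intro a
      rw [show (fun b => if a < b then w a b * (if i = b then (1:ℝ) else 0) else 0)
          = fun b => if i = b then (if a < b then w a b else 0) else 0 from ?_]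
      · rw [Finset.sum_ite_eq]
        simp
      · funext b
        by_cases h : i = b <;> by_cases hab : a < b <;> simp [h, hab]
    rw [Finset.sum_congr rfl (fun a _ => e1 a), Finset.sum_congr rfl (fun a _ => e2 a),
      Finset.sum_ite_eq]
    simp only [Finset.mem_univ, if_pos]
    rw [← Finset.sum_add_distrib]
    refine Finset.sum_congr rfl fun l _ => ?_
    rcases lt_trichotomy i l with h | h | h
    · simp [h, asymm h, (ne_of_gt h : l ≠ i)]
    · simp [h, lt_irrefl]
    · simp [h, asymm h, (ne_of_lt h : l ≠ i), hsymm l i]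
  · rw [if_neg hij]
    have hzero : ∀ p ∈ (univ : Finset (Fin N × Fin N)),
        p ∉ ({(i,j), (j,i)} : Finset (Fin N × Fin N)) → (if p.1 < p.2 then
        w p.1 p.2 * (((if i = p.1 then (1:ℝ) else 0) - (if i = p.2 then 1 else 0)) *
          ((if j = p.1 then (1:ℝ) else 0) - (if j = p.2 then 1 else 0))) else 0) = 0 := by
      rintro ⟨a, b⟩ - hp
      simp only [Finset.mem_insert, Finset.mem_singleton, Prod.mk.injEq, not_or, not_and] at hp
      obtain ⟨hp1, hp2⟩ := hp
      by_cases hab : a < b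
      · rw [if_pos hab]
        rcases eq_or_ne i a with rfl | h1
        · have hjb : ¬ j = b := fun hh => hp1 rfl hh.symm
          simp [hij, Ne.symm hij, hjb]
        · rcases eq_or_ne i b with rfl | h2
          · have hja : ¬ j = a := fun hh => hp2 hh.symm rfl
            simp [h1, hja, hij, Ne.symm hij]
          · simp [h1, h2]
      · exact if_neg hab
    rw [← Finset.sum_subset (Finset.subset_univ _) hzero,
      Finset.sum_pair (by simp [hij] : ((i,j) : Fin N × Fin N) ≠ (j,i))]
    rcases lt_trichotomy i j with h | h | h
    · simp [h, asymm h, hij, Ne.symm hij]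
    · exact absurd h hij
    · simp [h, asymm h, hij, Ne.symm hij, hsymm j i]

theorem stmt_17 {N : ℕ} (hN : 2 ≤ N) (w : Fin N → Fin N → ℝ)
    (hsymm : ∀ i j, w i j = w j i) (hpos : ∀ i j, 0 ≤ w i j)
    (hconn : ∀ u v : Fin N, Relation.ReflTransGen (fun a b => 0 < w a b) u v)
    (k : Fin N) :
    ∃ w' : Fin N → Fin N → ℝ,
      (∀ i j, w' i j = w' j i) ∧ (∀ i j, 0 ≤ w' i j) ∧
      (∀ j, w' k j = 0) ∧
      lap w - (lap w k k)⁻¹ •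
          Matrix.vecMulVec (fun a => lap w a k) (fun a => lap w k a) = lap w' ∧
      (∀ u v : Fin N, u ≠ k → v ≠ k →
        Relation.ReflTransGen (fun a b => 0 < w' a b) u v) := by
  classical
  set d : ℝ := ∑ l, if l = k then 0 else w k l with hd_def
  have hd0 : ∀ l : Fin N, (0:ℝ) ≤ if l = k then 0 else w k l := by
    intro l; split
    · exact le_refl 0
    · exact hpos k l
  have : Nontrivial (Fin N) := by
    rcases N with _ | _ | n
    · omega
    · omega
    · infer_instance
  obtain ⟨m, hm⟩ := exists_ne k
  obtain ⟨c, hck, hwc⟩ : ∃ c, c ≠ k ∧ 0 < w k c := by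
    rcases exists_first_step (hconn k m) with h | ⟨c, hck, hwck⟩
    · exact absurd h.symm hm
    · exact ⟨c, hck, hwck⟩
  have hd : 0 < d := by
    rw [hd_def]
    refine Finset.sum_pos' (fun l _ => hd0 l) ⟨c, Finset.mem_univ c, ?_⟩
    simpa [hck] using hwc
  have hdne : d ≠ 0 := ne_of_gt hd
  have hdinv : 0 ≤ d⁻¹ := le_of_lt (inv_pos.mpr hd)
  set w' : Fin N → Fin N → ℝ :=
    fun i j => if i = k ∨ j = k then 0 else w i j + d⁻¹ * (w i k * w k j) with hw'_def
  have hw'symm : ∀ i j, w' i j = w' j i := by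
    intro i j
    rw [hw'_def]
    simp only
    by_cases h1 : i = k <;> by_cases h2 : j = k <;> simp [h1, h2]
    rw [hsymm i j, hsymm i k, hsymm k j]
    ring
  have hw'pos : ∀ i j, 0 ≤ w' i j := by
    intro i j
    rw [hw'_def]; simp only
    split
    · exact le_refl 0
    · exact add_nonneg (hpos i j) (mul_nonneg hdinv (mul_nonneg (hpos i k) (hpos k j)))
  have hw'k : ∀ j, w' k j = 0 := by intro j; simp [hw'_def]
  have hlkk : lap w k k = d := by rw [lap_apply w hsymm]; simp [hd_def]
  refine ⟨w', hw'symm, hw'pos, hw'k, ?_, ?_⟩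
  · -- matrix identity
    ext i j
    simp only [Matrix.sub_apply, Matrix.smul_apply, Matrix.vecMulVec_apply, smul_eq_mul, hlkk]
    rcases eq_or_ne i k with rfl | hik
    · -- row k
      have hr : lap w' i j = 0 := by
        rw [lap_apply w' hw'symm]
        split
        · exact Finset.sum_eq_zero fun l _ => by simp [hw'k]
        · simp [hw'k j]
      rw [hr, hlkk, ← mul_assoc, inv_mul_cancel₀ hdne, one_mul, sub_self]
    · rcases eq_or_ne j k with rfl | hjk
      · have hr : lap w' i j = 0 := by
          rw [lap_apply w' hw'symm, if_neg hik]
          simp [hw'_def]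
        rw [hr, hlkk, mul_comm (lap w i j) d, ← mul_assoc, inv_mul_cancel₀ hdne, one_mul,
          sub_self]
      · rcases eq_or_ne i j with rfl | hij
        · -- diagonal, i ≠ k
          rw [lap_apply w hsymm i i, lap_apply w hsymm i k, lap_apply w hsymm k i,
            lap_apply w' hw'symm i i, if_pos rfl, if_pos rfl, if_neg hik, if_neg (Ne.symm hjk)]
          have key : ∀ l : Fin N, (if l = i then (0:ℝ) else w' i l)
              = ((if l = i then 0 else w i l) - (if l = k then w i k else 0))
                + d⁻¹ * w i k * ((if l = k then 0 else w k l) - (if l = i then w k i else 0)) := by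
            intro l
            by_cases h1 : l = i
            · subst h1; simp [hik]
            · by_cases h2 : l = k
              · subst h2; simp [hw'_def, h1]
              · simp [hw'_def, h1, h2, hik]
                ring
          rw [Finset.sum_congr rfl fun l _ => key l]
          rw [Finset.sum_add_distrib, ← Finset.mul_sum, Finset.sum_sub_distrib,
            Finset.sum_sub_distrib, Finset.sum_ite_eq', Finset.sum_ite_eq']
          simp only [Finset.mem_univ, if_pos, ← hd_def]
          field_simp
          ring
        · -- off-diagonal, both ≠ k
          rw [lap_apply w hsymm i j, lap_apply w hsymm i k, lap_apply w hsymm k j,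
            lap_apply w' hw'symm i j, if_neg hij, if_neg hij, if_neg hik, if_neg (Ne.symm hjk)]
          have : w' i j = w i j + d⁻¹ * (w i k * w k j) := by simp [hw'_def, hik, hjk]
          rw [this]
          ring
  · -- connectivity
    intro u v hu hv
    refine lift_conn (fun a b => 0 < w a b) (fun a b => 0 < w' a b) k ?_ ?_ hu hv (hconn u v)
    · intro a b ha hb hab
      have : w' a b = w a b + d⁻¹ * (w a k * w k b) := by simp [hw'_def, ha, hb]
      rw [this]
      exact add_pos_of_pos_of_nonneg hab
        (mul_nonneg hdinv (mul_nonneg (hpos a k) (hpos k b)))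
    · intro a b ha hb hak hkb
      have : w' a b = w a b + d⁻¹ * (w a k * w k b) := by simp [hw'_def, ha, hb]
      rw [this]
      exact add_pos_of_nonneg_of_pos (hpos a b)
        (mul_pos (inv_pos.mpr hd) (mul_pos hak hkb))
end
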